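/- If a language L over a finite alphabet is recognized with probability p > 1/2 by a probabilistic finite automaton (row-stochastic transition matrices, acceptance probability ≥ p for words in L and rejection probability ≥ p for words not in L), then L is regular. -/
import Mathlib


open scoped BigOperators

/-- A probabilistic finite automaton over alphabet `A` with finite state type `Q`. -/
structure PFA (A Q : Type) [Fintype Q] where
  init : Q → ℝ
  trans : A → Q → Q → ℝ
  accept : Finset Q

namespace PFA

variable {A Q : Type} [Fintype Q] (P : PFA A Q)

/-- The distribution over states after reading the word `w`. -/
def run (w : List A) : Q → ℝ :=
  w.foldl (fun v c q' => ∑ q, v q * P.trans c q q') P.init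

/-- The probability of accepting the word `w`. -/
def accProb (w : List A) : ℝ := ∑ q ∈ P.accept, P.run w q

end PFA

namespace RabinAux

variable {A Q : Type} [Fintype Q] (P : PFA A Q)

lemma abs_sub_lt_of_floor_div_eq {x y δ : ℝ} (hδ : 0 < δ) (h : ⌊x/δ⌋ = ⌊y/δ⌋) :
    |x - y| < δ := by
  have h1 := Int.floor_le (x/δ)
  have h2 := Int.lt_floor_add_one (x/δ)
  have h3 := Int.floor_le (y/δ)
  have h4 := Int.lt_floor_add_one (y/δ)
  rw [h] at h1 h2
  have hx : x / δ * δ = x := div_mul_cancel₀ x hδ.ne'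
  have hy : y / δ * δ = y := div_mul_cancel₀ y hδ.ne'
  rw [abs_lt]
  constructor <;> nlinarith

/-- One application of the transition matrix. -/
def stepv (v : Q → ℝ) (c : A) : Q → ℝ := fun q' => ∑ q, v q * P.trans c q q'

lemma run_eq_foldl (w : List A) : P.run w = w.foldl (stepv P) P.init := rfl

lemma run_append (w u : List A) : P.run (w ++ u) = u.foldl (stepv P) (P.run w) := by
  simp [run_eq_foldl, List.foldl_append]

lemma step_contract (htrans_nonneg : ∀ c q q', 0 ≤ P.trans c q q')
    (htrans_sum : ∀ c q, ∑ q', P.trans c q q' = 1) (v v' : Q → ℝ) (c : A) :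
    ∑ q, |stepv P v c q - stepv P v' c q| ≤ ∑ q, |v q - v' q| := by
  have key : ∀ q', |stepv P v c q' - stepv P v' c q'| ≤
      ∑ q, |v q - v' q| * P.trans c q q' := by
    intro q'
    have : stepv P v c q' - stepv P v' c q' = ∑ q, (v q - v' q) * P.trans c q q' := by
      simp [stepv, sub_mul, Finset.sum_sub_distrib]
    rw [this]
    refine (Finset.abs_sum_le_sum_abs _ _).trans (le_of_eq ?_)
    refine Finset.sum_congr rfl fun q _ => ?_
    rw [abs_mul, abs_of_nonneg (htrans_nonneg c q q')]
  calc ∑ q', |stepv P v c q' - stepv P v' c q'|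
      ≤ ∑ q', ∑ q, |v q - v' q| * P.trans c q q' := Finset.sum_le_sum fun q' _ => key q'
    _ = ∑ q, |v q - v' q| * ∑ q', P.trans c q q' := by
        rw [Finset.sum_comm]; simp [Finset.mul_sum]
    _ = ∑ q, |v q - v' q| := by simp [htrans_sum]

lemma foldl_contract (htrans_nonneg : ∀ c q q', 0 ≤ P.trans c q q')
    (htrans_sum : ∀ c q, ∑ q', P.trans c q q' = 1) (u : List A) :
    ∀ v v' : Q → ℝ,
      ∑ q, |u.foldl (stepv P) v q - u.foldl (stepv P) v' q| ≤ ∑ q, |v q - v' q| := by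
  induction u with
  | nil => intro v v'; simp
  | cons c u ih =>
    intro v v'
    simpa using (ih (stepv P v c) (stepv P v' c)).trans
      (step_contract P htrans_nonneg htrans_sum v v' c)

lemma foldl_nonneg (htrans_nonneg : ∀ c q q', 0 ≤ P.trans c q q') (w : List A) :
    ∀ v : Q → ℝ, (∀ q, 0 ≤ v q) → ∀ q, 0 ≤ w.foldl (stepv P) v q := by
  induction w with
  | nil => intro v hv q; exact hv q
  | cons c w ih =>
    intro v hv q
    refine ih (stepv P v c) (fun q' => ?_) q
    exact Finset.sum_nonneg fun q _ => mul_nonneg (hv q) (htrans_nonneg c q q')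

lemma foldl_sum (htrans_sum : ∀ c q, ∑ q', P.trans c q q' = 1) (w : List A) :
    ∀ v : Q → ℝ, ∑ q, w.foldl (stepv P) v q = ∑ q, v q := by
  induction w with
  | nil => intro v; rfl
  | cons c w ih =>
    intro v
    rw [List.foldl_cons, ih]
    rw [show ∑ q, stepv P v c q = ∑ q', ∑ q, v q * P.trans c q q' from rfl, Finset.sum_comm]
    simp [← Finset.mul_sum, htrans_sum]

lemma run_nonneg (hinit_nonneg : ∀ q, 0 ≤ P.init q)
    (htrans_nonneg : ∀ c q q', 0 ≤ P.trans c q q') (w : List A) (q : Q) :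
    0 ≤ P.run w q := by
  rw [run_eq_foldl]
  exact foldl_nonneg P htrans_nonneg w P.init hinit_nonneg q

lemma run_sum (hinit_sum : ∑ q, P.init q = 1)
    (htrans_sum : ∀ c q, ∑ q', P.trans c q q' = 1) (w : List A) :
    ∑ q, P.run w q = 1 := by
  rw [run_eq_foldl, foldl_sum P htrans_sum w P.init, hinit_sum]

lemma run_le_one (hinit_nonneg : ∀ q, 0 ≤ P.init q) (hinit_sum : ∑ q, P.init q = 1)
    (htrans_nonneg : ∀ c q q', 0 ≤ P.trans c q q')
    (htrans_sum : ∀ c q, ∑ q', P.trans c q q' = 1) (w : List A) (q : Q) :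
    P.run w q ≤ 1 := by
  rw [← run_sum P hinit_sum htrans_sum w]
  exact Finset.single_le_sum (fun q _ => run_nonneg P hinit_nonneg htrans_nonneg w q)
    (Finset.mem_univ q)

lemma accProb_diff (w w' : List A) :
    |P.accProb w - P.accProb w'| ≤ ∑ q, |P.run w q - P.run w' q| := by
  rw [show P.accProb w - P.accProb w' = ∑ q ∈ P.accept, (P.run w q - P.run w' q) from by
    simp [PFA.accProb, Finset.sum_sub_distrib]]
  refine (Finset.abs_sum_le_sum_abs _ _).trans ?_
  exact Finset.sum_le_sum_of_subset_of_nonneg (Finset.subset_univ _)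
    (fun q _ _ => abs_nonneg _)

end RabinAux

/-- Rabin: a language recognized by a PFA with isolated cut-point
(probability `p > 1/2`) is regular. -/
theorem stmt12 (A Q : Type) [Fintype Q] (P : PFA A Q) (L : Language A) (p : ℝ)
    (hinit_nonneg : ∀ q, 0 ≤ P.init q) (hinit_sum : ∑ q, P.init q = 1)
    (htrans_nonneg : ∀ c q q', 0 ≤ P.trans c q q')
    (htrans_sum : ∀ c q, ∑ q', P.trans c q q' = 1)
    (hp : 1 / 2 < p)
    (hacc : ∀ w ∈ L, p ≤ P.accProb w)
    (hrej : ∀ w ∉ L, P.accProb w ≤ 1 - p) :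
    ∃ (σ : Type) (_ : Fintype σ) (M : DFA A σ), M.accepts = L := by
  classical
  open RabinAux in
  set ε : ℝ := 2 * p - 1 with hεdef
  have hε : 0 < ε := by rw [hεdef]; linarith
  set n : ℕ := Fintype.card Q with hndef
  set δ : ℝ := ε / (n + 1) with hδdef
  have hδ : 0 < δ := by positivity
  set φ : List A → (Q → ℤ) := fun w q => ⌊P.run w q / δ⌋ with hφdef
  -- words with the same discretization have the same left quotient
  have hclose : ∀ w w', φ w = φ w' → ∑ q, |P.run w q - P.run w' q| < ε := by
    intro w w' h
    have hq : ∀ q, |P.run w q - P.run w' q| ≤ δ := fun q =>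
      (abs_sub_lt_of_floor_div_eq hδ (congrFun h q)).le
    calc ∑ q, |P.run w q - P.run w' q| ≤ ∑ _q : Q, δ := Finset.sum_le_sum fun q _ => hq q
      _ = n * δ := by simp [hndef, mul_comm]
      _ < ε := by
          rw [hδdef, mul_comm, div_mul_eq_mul_div, div_lt_iff₀ (by positivity : (0:ℝ) < (n:ℝ)+1)]
          have : (0:ℝ) ≤ (n:ℝ) := Nat.cast_nonneg n
          nlinarith
  set lq : List A → Set (List A) := fun w => {u | w ++ u ∈ L} with hlqdef
  have hlqeq : ∀ w w', φ w = φ w' → lq w = lq w' := by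
    intro w w' h
    have hd : ∀ u, |P.accProb (w ++ u) - P.accProb (w' ++ u)| < ε := by
      intro u
      refine (accProb_diff P _ _).trans_lt ?_
      calc ∑ q, |P.run (w ++ u) q - P.run (w' ++ u) q|
          ≤ ∑ q, |P.run w q - P.run w' q| := by
            simp only [run_append]
            exact foldl_contract P htrans_nonneg htrans_sum u _ _
        _ < ε := hclose w w' h
    ext u
    simp only [hlqdef, Set.mem_setOf_eq]
    constructor
    · intro hu
      by_contra hu'
      have h1 := hacc _ hu
      have h2 := hrej _ hu'
      have := hd u
      rw [abs_lt] at this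
      simp only [hεdef] at this
      linarith [this.2]
    · intro hu
      by_contra hu'
      have h1 := hacc _ hu
      have h2 := hrej _ hu'
      have := hd u
      rw [abs_lt] at this
      simp only [hεdef] at this
      linarith [this.1]
  -- the range of φ is finite
  have hφfin : (Set.range φ).Finite := by
    refine Set.Finite.subset (Set.Finite.pi (fun _ : Q => Set.finite_Icc (0:ℤ) ⌊1/δ⌋)) ?_
    rintro _ ⟨w, rfl⟩
    simp only [Set.mem_pi, Set.mem_univ, Set.mem_Icc, forall_true_left]
    intro q
    constructor
    · exact Int.floor_nonneg.2 (div_nonneg (run_nonneg P hinit_nonneg htrans_nonneg w q) hδ.le)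
    · refine Int.floor_le_floor ?_
      gcongr
      exact run_le_one P hinit_nonneg hinit_sum htrans_nonneg htrans_sum w q
  -- hence the range of lq is finite
  have hlqfin : (Set.range lq).Finite := by
    set g : (Q → ℤ) → Set (List A) :=
      fun x => if h : x ∈ Set.range φ then lq h.choose else ∅ with hgdef
    refine Set.Finite.subset (hφfin.image g) ?_
    rintro _ ⟨w, rfl⟩
    refine ⟨φ w, Set.mem_range_self _, ?_⟩
    have hx : φ w ∈ Set.range φ := Set.mem_range_self w
    rw [hgdef]
    simp only [dif_pos hx]
    exact hlqeq _ _ hx.choose_spec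
  -- build the DFA on the (finite) set of left quotients
  refine ⟨↥(Set.range lq), hlqfin.fintype, ?_, ?_⟩
  · exact
      { step := fun s c => ⟨{u | c :: u ∈ s.val}, by
          obtain ⟨w, hw⟩ := s.2
          exact ⟨w ++ [c], by rw [← hw]; ext u; simp [hlqdef, List.append_assoc]⟩⟩
        start := ⟨lq [], ⟨[], rfl⟩⟩
        accept := {s | [] ∈ s.val} }
  · set M : DFA A ↥(Set.range lq) :=
      { step := fun s c => ⟨{u | c :: u ∈ s.val}, by
          obtain ⟨w, hw⟩ := s.2
          exact ⟨w ++ [c], by rw [← hw]; ext u; simp [hlqdef, List.append_assoc]⟩⟩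
        start := ⟨lq [], ⟨[], rfl⟩⟩
        accept := {s | [] ∈ s.val} } with hMdef
    have heval : ∀ (w v : List A) (s : ↥(Set.range lq)), s.val = lq v →
        (M.evalFrom s w).val = lq (v ++ w) := by
      intro w
      induction w with
      | nil => intro v s hv; simpa using hv
      | cons c w ih =>
        intro v s hv
        have hstep : (M.step s c).val = lq (v ++ [c]) := by
          rw [hMdef]
          ext u
          simp [hv, hlqdef, List.append_assoc]
        have := ih (v ++ [c]) (M.step s c) hstep
        simpa [List.append_assoc] using this
    ext w
    have hv := heval w [] M.start rfl
    rw [List.nil_append] at hv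
    constructor
    · intro hw
      have h0 : [] ∈ (M.evalFrom M.start w).val := hw
      rw [hv] at h0
      simpa [hlqdef] using h0
    · intro hw
      have h0 : [] ∈ lq w := by simpa [hlqdef] using hw
      rw [← hv] at h0
      exact h0
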